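/- Let Ω₁, Ω₂ be r.e. infinite sets, P₁ ∈ 𝕡(Ω₁), P₂ ∈ 𝕡(Ω₂), α₁ ∈ Ω₁^∞, α₂ ∈ Ω₂^∞. If α₁ × α₂ is Martin-Löf (P₁ × P₂)-random relative to oracles β₁,…,β_ℓ, then α₂ is Martin-Löf P₂-random relative to β₁,…,β_ℓ. (The marginal of a relatively random pair is relatively random; no computability assumption on P₁ or P₂ is needed for this direction.) -/

import Mathlib

open scoped ENNReal

/-- A set of finite strings is prefix-free. -/
def prefixFree {Γ : Type*} (E : Set (List Γ)) : Prop :=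
  ∀ σ ∈ E, ∀ τ ∈ E, σ <+: τ → σ = τ

/-- The prefix of length `n` of an infinite sequence. -/
def pre {Γ : Type*} (α : ℕ → Γ) (n : ℕ) : List Γ := List.ofFn fun i : Fin n => α i

/-- The open set generated by a set of strings: sequences having some prefix in `S`. -/
def cyl {Γ : Type*} (S : Set (List Γ)) : Set (ℕ → Γ) := {α | ∃ n, pre α n ∈ S}

/-- The (generalized) Bernoulli probability of a finite string:
`P(σ₁)···P(σₙ)`. -/
def strP {Γ : Type*} (P : Γ → ℝ) (σ : List Γ) : ℝ := (σ.map P).prod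

/-- The `λ_P`-measure of the open set generated by a prefix-free set `S`. -/
noncomputable def mOpen {Γ : Type*} (P : Γ → ℝ) (S : Set (List Γ)) : ℝ≥0∞ :=
  ∑' σ : S, ENNReal.ofReal (strP P (σ : List Γ))

/-- All symbols of the string belong to the alphabet `O`. -/
def strIn {Γ : Type*} (O : Set Γ) (σ : List Γ) : Prop := ∀ a ∈ σ, a ∈ O

/-- All symbols of the sequence belong to the alphabet `O`. -/
def seqIn {Γ : Type*} (O : Set Γ) (α : ℕ → Γ) : Prop := ∀ n, α n ∈ O

/-- `P` is a discrete probability space on the alphabet `O`. -/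
def isProb {Γ : Type*} (O : Set Γ) (P : Γ → ℝ) : Prop :=
  (∀ a ∈ O, 0 ≤ P a) ∧ HasSum (fun a : O => P (a : Γ)) 1

/-- The combinatorial conditions on a Martin-Löf `P`-test: sections consist of strings
over the alphabet, are prefix-free, and have `λ_P`-measure `< 2⁻ⁿ`. -/
def isTestSet {Γ : Type*} (O : Set Γ) (P : Γ → ℝ) (C : Set (ℕ × List Γ)) : Prop :=
  (∀ x ∈ C, strIn O x.2) ∧
  ∀ n : ℕ, 1 ≤ n → prefixFree {σ | (n, σ) ∈ C} ∧
    mOpen P {σ | (n, σ) ∈ C} < (2 : ℝ≥0∞)⁻¹ ^ n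

/-- A Martin-Löf `P`-test: an r.e. subset of `ℕ⁺ × Ω*` satisfying the test conditions. -/
def MLTest {Γ : Type*} [Primcodable Γ] (O : Set Γ) (P : Γ → ℝ)
    (C : Set (ℕ × List Γ)) : Prop :=
  REPred (· ∈ C) ∧ isTestSet O P C

/-- `α` is Martin-Löf `P`-random: it passes every Martin-Löf `P`-test. -/
def MLRandom {Γ : Type*} [Primcodable Γ] (O : Set Γ) (P : Γ → ℝ) (α : ℕ → Γ) : Prop :=
  ∀ C : Set (ℕ × List Γ), MLTest O P C → ∃ n, 1 ≤ n ∧ α ∉ cyl {σ | (n, σ) ∈ C}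

/-- Partial recursiveness relative to an oracle `O : ℕ → ℕ`, mirroring `Nat.Partrec`
with an additional base case for the oracle. -/
inductive RecIn (O : ℕ → ℕ) : (ℕ →. ℕ) → Prop
  | oracle : RecIn O fun n => Part.some (O n)
  | zero : RecIn O (pure 0)
  | succ : RecIn O fun n => Part.some (n + 1)
  | left : RecIn O fun n => Part.some (Nat.unpair n).1
  | right : RecIn O fun n => Part.some (Nat.unpair n).2
  | pair {f g} : RecIn O f → RecIn O g → RecIn O fun n => Nat.pair <$> f n <*> g n
  | comp {f g} : RecIn O f → RecIn O g → RecIn O fun n => g n >>= f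
  | prec {f g} : RecIn O f → RecIn O g → RecIn O (Nat.unpaired fun a n =>
      n.rec (f a) fun y IH => do let i ← IH; g (Nat.pair a (Nat.pair y i)))
  | rfind {f} : RecIn O f →
      RecIn O fun a => Nat.rfind fun n => (fun m => decide (m = 0)) <$> f (Nat.pair a n)

/-- A set (of encodable elements) is r.e. relative to the oracle `O`. -/
def REIn {β : Type*} [Primcodable β] (O : ℕ → ℕ) (C : Set β) : Prop :=
  ∃ f : ℕ →. ℕ, RecIn O f ∧ ∀ x : β, x ∈ C ↔ (f (Encodable.encode x)).Dom

/-- Combine finitely many oracle sequences into a single oracle via pairing. -/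
def combineOracles {ℓ : ℕ} (β : Fin ℓ → ℕ → ℕ) : ℕ → ℕ := fun n =>
  if h : n.unpair.1 < ℓ then β ⟨n.unpair.1, h⟩ n.unpair.2 else 0

/-- A Martin-Löf `P`-test relative to the oracle `O`. -/
def MLTestRel {Γ : Type*} [Primcodable Γ] (Alph : Set Γ) (P : Γ → ℝ) (O : ℕ → ℕ)
    (C : Set (ℕ × List Γ)) : Prop :=
  REIn O C ∧ isTestSet Alph P C

/-- `α` is Martin-Löf `P`-random relative to the oracle `O`. -/
def MLRandomRel {Γ : Type*} [Primcodable Γ] (Alph : Set Γ) (P : Γ → ℝ) (O : ℕ → ℕ)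
    (α : ℕ → Γ) : Prop :=
  ∀ C : Set (ℕ × List Γ), MLTestRel Alph P O C → ∃ n, 1 ≤ n ∧ α ∉ cyl {σ | (n, σ) ∈ C}


/-! A `P₂`-test `C` relative to an oracle lifts to a `(P₁ × P₂)`-test relative to the same oracle
whose `n`-th level is the union of the cylinders `Ω₁^|σ| × {σ}` over `σ ∈ Cₙ`. The lift is r.e. in
the oracle because `Ω₁` is r.e., it is prefix-free because `Cₙ` is, and its measure is at most that
of `Cₙ` because the strings of a fixed length over `Ω₁` have total `P₁`-probability at most `1`.
Since `α₁` takes values in `Ω₁`, a prefix of `α₂` in `Cₙ` yields a prefix of `α₁ × α₂` in the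
lifted level, so the pair escapes the lifted test only where `α₂` escapes `C`. -/

theorem RecIn.of_partrec {O : ℕ → ℕ} {f : ℕ →. ℕ} (h : Nat.Partrec f) : RecIn O f := by
  induction h with
  | zero => exact .zero
  | succ => exact .succ
  | left => exact .left
  | right => exact .right
  | pair _ _ hf hg => exact .pair hf hg
  | comp _ _ hf hg => exact .comp hf hg
  | prec _ _ hf hg => exact .prec hf hg
  | rfind _ hf => exact .rfind hf

theorem RecIn.of_eq {O : ℕ → ℕ} {f g : ℕ →. ℕ} (hf : RecIn O f) (H : ∀ n, f n = g n) :
    RecIn O g :=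
  funext H ▸ hf

namespace REIn

variable {β γ : Type*} [Primcodable β] [Primcodable γ] {O : ℕ → ℕ}

theorem of_rePred {p : β → Prop} (hp : REPred p) : REIn O {x | p x} :=
  ⟨_, .of_partrec hp, fun x => by simp [Encodable.encodek, Part.assert]⟩

theorem preimage {C : Set γ} (hC : REIn O C) {h : β → γ} (hh : Computable h) :
    REIn O (h ⁻¹' C) := by
  obtain ⟨f, hf, hfC⟩ := hC
  have hh' : Nat.Partrec fun n => (Encodable.decode (α := β) n : Part β).bind
      fun a => Part.some (Encodable.encode (h a)) :=
    Nat.Partrec.of_eq hh fun n => by simp [Part.bind]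
  refine ⟨_, .comp hf (.of_partrec hh'), fun x => ?_⟩
  simp only [Set.mem_preimage, hfC, Encodable.encodek, Part.coe_some, Part.bind_some]
  exact Iff.of_eq (congrArg Part.Dom (Part.bind_some _ f).symm)

theorem inter {A B : Set β} (hA : REIn O A) (hB : REIn O B) : REIn O (A ∩ B) := by
  obtain ⟨f, hf, hfA⟩ := hA
  obtain ⟨g, hg, hgB⟩ := hB
  have hfg : RecIn O fun n => (f n).bind fun _ => g n := by
    have hid : RecIn O fun n => Part.some n := .of_partrec (.of_primrec .id)
    refine (RecIn.comp (RecIn.comp hg .right) (.pair hf hid)).of_eq fun n => ?_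
    simp only [← Part.ret_eq_some, seq_pure, bind_map_left, Nat.unpair_pair]
    simp only [Part.ret_eq_some, Part.bind_eq_bind]
    exact congrArg _ (funext fun _ => Part.bind_some n g)
  refine ⟨_, hfg, fun x => ?_⟩
  simp [hfA, hgB]

end REIn

theorem REPred.comp {α β : Type*} [Primcodable α] [Primcodable β] {p : β → Prop}
    (hp : REPred p) {f : α → β} (hf : Computable f) : REPred fun a => p (f a) :=
  Partrec.comp hp hf

theorem REPred.list_forall {α : Type*} [Primcodable α] {p : α → Prop} (hp : REPred p) :
    REPred fun l : List α => ∀ a ∈ l, p a := by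
  -- walk down the list, halting at `[]` and diverging at the first element failing `p`
  let step : List α →. Unit ⊕ List α := fun l =>
    Option.casesOn l.head? (Part.some (Sum.inl ())) fun a =>
      (Part.assert (p a) fun _ => Part.some ()).map fun _ => Sum.inr l.tail
  have hstep : Partrec step :=
    Partrec.optionCasesOn_right Primrec.list_head?.to_comp (Computable.const _)
      ((hp.comp Computable.snd).map
        (Computable.sumInr.comp
          (Primrec.list_tail.to_comp.comp (Computable.fst.comp Computable.fst))).to₂)
  refine (Partrec.fix hstep).dom_re.of_eq fun l => ?_
  induction l with
  | nil =>
    exact iff_of_true (Part.dom_iff_mem.2 ⟨(), PFun.fix_stop (Part.mem_some _)⟩) (by simp)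
  | cons a l ih =>
    rw [List.forall_mem_cons]
    by_cases ha : p a
    · have hfwd : Sum.inr l ∈ step (a :: l) := by simp [step, ha]
      rw [PFun.fix_fwd_eq hfwd, ih]
      exact (and_iff_right ha).symm
    · refine iff_of_false (fun h => ?_) (fun h => ha h.1)
      obtain ⟨b, hb⟩ := Part.dom_iff_mem.1 h
      exact ha (PFun.dom_of_mem_fix hb).fst

section Strings

variable {Γ : Type*} {O : Set Γ} {P : Γ → ℝ}

theorem strP_cons (a : Γ) (l : List Γ) : strP P (a :: l) = P a * strP P l :=
  List.prod_cons

theorem strP_nonneg (hP : ∀ a ∈ O, 0 ≤ P a) {l : List Γ} (hl : strIn O l) : 0 ≤ strP P l :=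
  List.prod_nonneg (List.forall_mem_map.2 fun a ha => hP a (hl a ha))

theorem strP_prod {Γ₁ Γ₂ : Type*} (P₁ : Γ₁ → ℝ) (P₂ : Γ₂ → ℝ) (τ : List (Γ₁ × Γ₂)) :
    strP (fun p => P₁ p.1 * P₂ p.2) τ =
      strP P₁ (τ.map Prod.fst) * strP P₂ (τ.map Prod.snd) := by
  simp [strP, Function.comp_def, List.prod_map_mul]

theorem strIn_pre {α : ℕ → Γ} (hα : seqIn O α) (n : ℕ) : strIn O (pre α n) := by
  simp only [strIn, pre, List.mem_ofFn]
  rintro _ ⟨i, rfl⟩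
  exact hα i

theorem map_pre {Γ' : Type*} (f : Γ → Γ') (α : ℕ → Γ) (n : ℕ) :
    (pre α n).map f = pre (f ∘ α) n :=
  List.map_ofFn

theorem isProb.tsum_ofReal_eq_one (hP : isProb O P) : ∑' a : O, ENNReal.ofReal (P a) = 1 := by
  rw [← ENNReal.ofReal_tsum_of_nonneg (fun a : O => hP.1 a a.2) hP.2.summable, hP.2.tsum_eq,
    ENNReal.ofReal_one]

theorem isProb.tsum_ofReal_strP_length_le_one (hP : isProb O P) (m : ℕ) :
    ∑' γ : {γ : List Γ // γ.length = m ∧ strIn O γ}, ENNReal.ofReal (strP P γ) ≤ 1 := by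
  induction m with
  | zero =>
    let nil : {γ : List Γ // γ.length = 0 ∧ strIn O γ} := ⟨[], rfl, by simp [strIn]⟩
    have hnil : Function.Surjective fun _ : Unit => nil := by
      rintro ⟨γ, hγ, -⟩
      exact ⟨(), Subtype.ext (List.length_eq_zero_iff.1 hγ).symm⟩
    refine (ENNReal.tsum_le_tsum_comp_of_surjective hnil _).trans ?_
    simp [nil, strP]
  | succ m ih =>
    let cons : O × {γ : List Γ // γ.length = m ∧ strIn O γ} →
        {γ : List Γ // γ.length = m + 1 ∧ strIn O γ} := fun x =>
      ⟨x.1 :: x.2.1, by simp [x.2.2.1], List.forall_mem_cons.2 ⟨x.1.2, x.2.2.2⟩⟩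
    have hcons : Function.Surjective cons := by
      rintro ⟨_ | ⟨a, γ⟩, hlen, hγ⟩
      · simp at hlen
      · simp only [strIn, List.mem_cons, forall_eq_or_imp] at hγ
        exact ⟨(⟨a, hγ.1⟩, ⟨γ, by simpa using hlen, hγ.2⟩), rfl⟩
    refine (ENNReal.tsum_le_tsum_comp_of_surjective hcons _).trans ?_
    calc ∑' x, ENNReal.ofReal (strP P (cons x).1)
        = ∑' x : O × {γ : List Γ // γ.length = m ∧ strIn O γ},
            ENNReal.ofReal (P x.1) * ENNReal.ofReal (strP P x.2.1) :=
          tsum_congr fun x => by rw [strP_cons, ENNReal.ofReal_mul (hP.1 _ x.1.2)]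
      _ = (∑' a : O, ENNReal.ofReal (P a)) *
            ∑' γ : {γ : List Γ // γ.length = m ∧ strIn O γ},
              ENNReal.ofReal (strP P γ) := by
          rw [ENNReal.tsum_prod', ← ENNReal.tsum_mul_right]
          exact tsum_congr fun a => ENNReal.tsum_mul_left (a := ENNReal.ofReal (P a))
      _ ≤ 1 := by rw [hP.tsum_ofReal_eq_one, one_mul]; exact ih

end Strings

section Lift

variable {Γ₁ Γ₂ : Type*}

/-- The union of the cylinders `O₁^|σ| × {σ}` over `σ ∈ S`. -/
def liftSnd (O₁ : Set Γ₁) (S : Set (List Γ₂)) : Set (List (Γ₁ × Γ₂)) :=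
  {τ | τ.map Prod.snd ∈ S ∧ strIn O₁ (τ.map Prod.fst)}

def liftTestSnd (O₁ : Set Γ₁) (C : Set (ℕ × List Γ₂)) : Set (ℕ × List (Γ₁ × Γ₂)) :=
  {x | x.2 ∈ liftSnd O₁ {σ | (x.1, σ) ∈ C}}

variable {O₁ : Set Γ₁} {O₂ : Set Γ₂} {P₁ : Γ₁ → ℝ} {P₂ : Γ₂ → ℝ}

theorem prefixFree_liftSnd {S : Set (List Γ₂)} (hS : prefixFree S) :
    prefixFree (liftSnd O₁ S) := by
  rintro σ ⟨hσ, -⟩ τ ⟨hτ, -⟩ hστ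
  refine hστ.eq_of_length ?_
  simpa using congrArg List.length (hS _ hσ _ hτ (hστ.map Prod.snd))

theorem mOpen_liftSnd_le (hP₁ : isProb O₁ P₁) (S : Set (List Γ₂)) :
    mOpen (fun p => P₁ p.1 * P₂ p.2) (liftSnd O₁ S) ≤ mOpen P₂ S := by
  let Fiber (σ : S) := {γ : List Γ₁ // γ.length = (σ : List Γ₂).length ∧ strIn O₁ γ}
  let split : liftSnd O₁ S → Σ σ : S, Fiber σ := fun τ =>
    ⟨⟨_, τ.2.1⟩, ⟨(τ : List (Γ₁ × Γ₂)).map Prod.fst, by simp, τ.2.2⟩⟩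
  have hsplit : Function.Injective split := by
    intro τ τ' h
    have h₁ := congrArg (fun s => (s.2 : List Γ₁)) h
    have h₂ := congrArg (fun s => (s.1 : List Γ₂)) h
    simp only [split] at h₁ h₂
    rw [Subtype.ext_iff, ← List.zip_unzip τ.1, ← List.zip_unzip τ'.1]
    simp only [List.unzip_fst, List.unzip_snd, h₁, h₂]
  let g : (Σ σ : S, Fiber σ) → ℝ≥0∞ := fun s =>
    ENNReal.ofReal (strP P₁ s.2.1) * ENNReal.ofReal (strP P₂ s.1.1)
  calc mOpen (fun p => P₁ p.1 * P₂ p.2) (liftSnd O₁ S)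
      = ∑' τ, g (split τ) := tsum_congr fun τ => by
        rw [strP_prod, ENNReal.ofReal_mul (strP_nonneg hP₁.1 τ.2.2)]
    _ ≤ ∑' s, g s := ENNReal.tsum_comp_le_tsum_of_injective hsplit g
    _ = ∑' σ : S, (∑' γ : Fiber σ, ENNReal.ofReal (strP P₁ γ.1)) *
          ENNReal.ofReal (strP P₂ σ.1) := by
        simp only [ENNReal.tsum_sigma', g, ENNReal.tsum_mul_right]
    _ ≤ ∑' σ : S, ENNReal.ofReal (strP P₂ σ.1) := ENNReal.tsum_le_tsum fun σ =>
        mul_le_of_le_one_left' (hP₁.tsum_ofReal_strP_length_le_one _)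

theorem isTestSet_liftTestSnd (hP₁ : isProb O₁ P₁) {C : Set (ℕ × List Γ₂)}
    (hC : isTestSet O₂ P₂ C) :
    isTestSet (O₁ ×ˢ O₂) (fun p => P₁ p.1 * P₂ p.2) (liftTestSnd O₁ C) := by
  refine ⟨fun x hx a ha => ⟨hx.2 _ (List.mem_map_of_mem ha),
    hC.1 _ hx.1 _ (List.mem_map_of_mem ha)⟩, fun n hn => ?_⟩
  obtain ⟨hpf, hmeas⟩ := hC.2 n hn
  exact ⟨prefixFree_liftSnd hpf, (mOpen_liftSnd_le hP₁ _).trans_lt hmeas⟩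

theorem REIn.liftTestSnd [Primcodable Γ₁] [Primcodable Γ₂] {O : ℕ → ℕ}
    (hO₁ : REPred (· ∈ O₁)) {C : Set (ℕ × List Γ₂)} (hC : REIn O C) :
    REIn O (liftTestSnd O₁ C) :=
  (hC.preimage (Computable.fst.pair (Primrec.list_map Primrec.snd
      (Primrec.snd.comp Primrec.snd).to₂).to_comp)).inter
    (of_rePred (hO₁.list_forall.comp
      (Primrec.list_map Primrec.snd (Primrec.fst.comp Primrec.snd).to₂).to_comp))

theorem pair_mem_cyl_liftTestSnd {C : Set (ℕ × List Γ₂)} {n : ℕ}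
    {α₁ : ℕ → Γ₁} {α₂ : ℕ → Γ₂} (hα₁ : seqIn O₁ α₁) (hα₂ : α₂ ∈ cyl {σ | (n, σ) ∈ C}) :
    (fun k => (α₁ k, α₂ k)) ∈ cyl {τ | (n, τ) ∈ liftTestSnd O₁ C} := by
  obtain ⟨m, hm⟩ := hα₂
  exact ⟨m, by rwa [map_pre], by rw [map_pre]; exact strIn_pre hα₁ m⟩

end Lift

theorem stmt19_general (Ω₁ Ω₂ : Set ℕ)
    (hre₁ : REPred (· ∈ Ω₁))
    (P₁ P₂ : ℕ → ℝ) (hP₁ : isProb Ω₁ P₁)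
    (ℓ : ℕ)
    (β : Fin ℓ → ℕ → ℕ)
    (α₁ α₂ : ℕ → ℕ) (hα₁ : seqIn Ω₁ α₁)
    (hpair : MLRandomRel (Ω₁ ×ˢ Ω₂) (fun p => P₁ p.1 * P₂ p.2) (combineOracles β)
      (fun k => (α₁ k, α₂ k))) :
    MLRandomRel Ω₂ P₂ (combineOracles β) α₂ := by
  intro C ⟨hCre, hCtest⟩
  obtain ⟨n, hn, hout⟩ :=
    hpair (liftTestSnd Ω₁ C) ⟨hCre.liftTestSnd hre₁, isTestSet_liftTestSnd hP₁ hCtest⟩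
  exact ⟨n, hn, fun hα₂ => hout (pair_mem_cyl_liftTestSnd hα₁ hα₂)⟩

/-- If the pair `α₁ × α₂` is Martin-Löf `(P₁ × P₂)`-random
relative to oracles `β₁,…,β_ℓ`, then the marginal `α₂` is Martin-Löf `P₂`-random
relative to `β₁,…,β_ℓ`. (No computability assumptions on `P₁`, `P₂`.) -/
theorem stmt19 (Ω₁ Ω₂ : Set ℕ)
    (hre₁ : REPred (· ∈ Ω₁)) (hinf₁ : Ω₁.Infinite)
    (hre₂ : REPred (· ∈ Ω₂)) (hinf₂ : Ω₂.Infinite)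
    (P₁ P₂ : ℕ → ℝ) (hP₁ : isProb Ω₁ P₁) (hP₂ : isProb Ω₂ P₂)
    (ℓ : ℕ) (Θ : Fin ℓ → Set ℕ)
    (hΘre : ∀ k, REPred (· ∈ Θ k)) (hΘinf : ∀ k, (Θ k).Infinite)
    (β : Fin ℓ → ℕ → ℕ) (hβ : ∀ k, seqIn (Θ k) (β k))
    (α₁ α₂ : ℕ → ℕ) (hα₁ : seqIn Ω₁ α₁) (hα₂ : seqIn Ω₂ α₂)
    (hpair : MLRandomRel (Ω₁ ×ˢ Ω₂) (fun p => P₁ p.1 * P₂ p.2) (combineOracles β)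
      (fun k => (α₁ k, α₂ k))) :
    MLRandomRel Ω₂ P₂ (combineOracles β) α₂ :=
  stmt19_general Ω₁ Ω₂ hre₁ P₁ P₂ hP₁ ℓ β α₁ α₂ hα₁ hpair
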